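/- arXiv:1701.07990 — 2 statements merged into one kernel-verified Lean document; each statement's English description precedes it below -/
import Mathlib

section
/- Let L be an n×n ICB matrix in δ-block echelon form and K a field. Then for every nonempty subset C ⊆ {1,…,n−1}, the binomial f_C = x^{(Lχ_C)⁺} − x^{(Lχ_C)⁻} is homogeneous with respect to the grading deg(x_i) = ν_i, and its leading monomial with respect to the weighted reverse lexicographic order is x^{(Lχ_C)⁺}, with leading coefficient 1. -/
open MvPolynomial Finset

/-- A critical binomial (CB) matrix. -/
def IsCB (n : ℕ) (L : Matrix (Fin n) (Fin n) ℤ) : Prop :=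
  (∀ i, 0 < L i i) ∧ (∀ i j : Fin n, i ≠ j → L i j ≤ 0) ∧ (∀ i, ∑ j, L i j = 0) ∧
    (∀ j, ∃ i, i ≠ j ∧ L i j ≠ 0)

/-- Irreducibility of a square matrix. -/
def IsIrreducibleMat {n : ℕ} (M : Matrix (Fin n) (Fin n) ℤ) : Prop :=
  ¬ ∃ I J : Set (Fin n), I.Nonempty ∧ J.Nonempty ∧ Disjoint I J ∧ I ∪ J = Set.univ ∧
      ∀ i ∈ I, ∀ j ∈ J, M i j = 0

def IsICB (n : ℕ) (L : Matrix (Fin n) (Fin n) ℤ) : Prop := IsCB n L ∧ IsIrreducibleMat L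

def IsPCB (n : ℕ) (L : Matrix (Fin n) (Fin n) ℤ) : Prop :=
  IsCB n L ∧ ∀ i j : Fin n, i ≠ j → L i j < 0

noncomputable def posExp {n : ℕ} (m : Fin n → ℤ) : Fin n →₀ ℕ :=
  Finsupp.equivFunOnFinite.symm fun i => (m i).toNat

noncomputable def negExp {n : ℕ} (m : Fin n → ℤ) : Fin n →₀ ℕ :=
  Finsupp.equivFunOnFinite.symm fun i => (-(m i)).toNat

noncomputable def binom (K : Type*) [Field K] {n : ℕ} (m : Fin n → ℤ) :
    MvPolynomial (Fin n) K :=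
  monomial (posExp m) 1 - monomial (negExp m) 1

def colLattice {n : ℕ} (L : Matrix (Fin n) (Fin n) ℤ) : AddSubgroup (Fin n → ℤ) :=
  AddSubgroup.closure {v | ∃ j : Fin n, v = fun i => L i j}

noncomputable def latticeIdeal (K : Type*) [Field K] {n : ℕ} (L : Matrix (Fin n) (Fin n) ℤ) :
    Ideal (MvPolynomial (Fin n) K) :=
  Ideal.span {f | ∃ m ∈ colLattice L, f = binom K m}

noncomputable def matrixIdeal (K : Type*) [Field K] {n : ℕ} (L : Matrix (Fin n) (Fin n) ℤ) :
    Ideal (MvPolynomial (Fin n) K) :=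
  Ideal.span {f | ∃ j : Fin n, f = binom K fun i => L i j}

def chi {n : ℕ} (C : Finset (Fin n)) : Fin n → ℤ := fun i => if i ∈ C then 1 else 0

/-- `L` is in `δ`-block echelon form: there is a partition of `{1,…,n-1}` into `δ`
consecutive nonempty intervals `I₁,…,I_δ` with `I_{δ+1} = {n}` (encoded by the monotone
surjection `β` sending each index to its block, with only the last vertex in the last
block) such that `L_{I_i,I_j} = 0` whenever `j + 2 ≤ i`, and every column of
`L_{I_{j+1},I_j}` is nonzero. -/
def IsBlockEchelon (n δ : ℕ) (L : Matrix (Fin n) (Fin n) ℤ) : Prop :=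
  ∃ β : Fin n → Fin (δ + 1), Monotone β ∧ Function.Surjective β ∧
    (∀ a : Fin n, β a = Fin.last δ ↔ (a : ℕ) = n - 1) ∧
    (∀ a b : Fin n, (β b : ℕ) + 2 ≤ (β a : ℕ) → L a b = 0) ∧
    (∀ b : Fin n, β b ≠ Fin.last δ →
      ∃ a : Fin n, (β a : ℕ) = (β b : ℕ) + 1 ∧ L a b ≠ 0)

/-- The weighted reverse lexicographic order with weights `ν` on (exponents of)
monomials: `x^α > x^β` iff `deg x^α > deg x^β`, or the degrees agree and the
rightmost nonzero entry of `α - β` is negative. -/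
def wrloGT {n : ℕ} (ν : Fin n → ℕ) (α β : Fin n →₀ ℕ) : Prop :=
  (∑ i, ν i * β i < ∑ i, ν i * α i) ∨
    ((∑ i, ν i * α i = ∑ i, ν i * β i) ∧
      ∃ j : Fin n, α j < β j ∧ ∀ k : Fin n, j < k → α k = β k)

/-- Let `L` be an ICB matrix in `δ`-block echelon form and `ν = ν(L)`.
For every nonempty `C ⊆ {1,…,n-1}`, the binomial `f_C = x^{(LχC)⁺} - x^{(LχC)⁻}` is
weighted homogeneous for the grading `deg xᵢ = νᵢ`, and its leading monomial with
respect to the weighted reverse lexicographic order is `x^{(LχC)⁺}`, with leading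
coefficient `1`. -/
theorem binom_homogeneous_and_leadingMonomial (n : ℕ) (hn : 3 ≤ n)
    (L : Matrix (Fin n) (Fin n) ℤ) (hL : IsICB n L)
    (δ : ℕ) (hech : IsBlockEchelon n δ L)
    (K : Type*) [Field K]
    (ν : Fin n → ℕ) (hν : ∀ i, 0 < ν i) (hgcd : Finset.univ.gcd ν = 1)
    (d : ℕ) (hd : 0 < d) (hadj : ∀ i j : Fin n, L.adjugate i j = (d : ℤ) * (ν j : ℤ)) :
    ∀ C : Finset (Fin n), C.Nonempty → (⟨n - 1, by omega⟩ : Fin n) ∉ C →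
      (∃ e : ℕ, (binom K (L.mulVec (chi C))).IsWeightedHomogeneous ν e) ∧
      coeff (posExp (L.mulVec (chi C))) (binom K (L.mulVec (chi C))) = 1 ∧
      ∀ α ∈ (binom K (L.mulVec (chi C))).support,
        α ≠ posExp (L.mulVec (chi C)) → wrloGT ν (posExp (L.mulVec (chi C))) α := by
  obtain ⟨⟨hLpos, hLoff, hLrow, hLcolnz⟩, hirr⟩ := hL
  obtain ⟨β, hβmono, hβsurj, hβlast, hβzero, hβnext⟩ := hech
  -- the weight vector pairs to zero with every column of L
  have hcol : ∀ j : Fin n, ∑ i, (ν i : ℤ) * L i j = 0 := by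
    intro j
    have : Nontrivial (Fin n) := Fin.nontrivial_iff_two_le.mpr (by omega)
    obtain ⟨i0, hi0⟩ := exists_ne j
    have h := congrFun (congrFun (Matrix.adjugate_mul L) i0) j
    rw [Matrix.mul_apply] at h
    simp only [hadj, Matrix.smul_apply, Matrix.one_apply_ne hi0, smul_zero] at h
    have h2 : (d : ℤ) * ∑ k, (ν k : ℤ) * L k j = 0 := by
      rw [Finset.mul_sum]
      simpa [mul_assoc] using h
    have hd' : (d : ℤ) ≠ 0 := by exact_mod_cast hd.ne'
    exact (mul_eq_zero.mp h2).resolve_left hd'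
  intro C hCne hCn1
  set m : Fin n → ℤ := L.mulVec (chi C) with hm
  have hmapp : ∀ i, m i = ∑ j ∈ C, L i j := by
    intro i
    simp [hm, Matrix.mulVec, dotProduct, chi, mul_ite, Finset.sum_ite_mem]
  have hdeg0 : ∑ i, (ν i : ℤ) * m i = 0 := by
    calc ∑ i, (ν i : ℤ) * m i = ∑ i, ∑ j ∈ C, (ν i : ℤ) * L i j := by
          simp [hmapp, Finset.mul_sum]
      _ = ∑ j ∈ C, ∑ i, (ν i : ℤ) * L i j := Finset.sum_comm
      _ = 0 := by simp [hcol]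
  -- the echelon structure
  set b : Fin n := C.max' hCne with hb
  have hbC : b ∈ C := C.max'_mem hCne
  have hβb : ∀ j ∈ C, (β j : ℕ) ≤ (β b : ℕ) := fun j hj => hβmono (C.le_max' j hj)
  have hbne : β b ≠ Fin.last δ := by
    intro h
    have hb1 : (b : ℕ) = n - 1 := (hβlast b).mp h
    have : b = (⟨n - 1, by omega⟩ : Fin n) := Fin.ext hb1
    exact hCn1 (this ▸ hbC)
  obtain ⟨a, hab, hLab⟩ := hβnext b hbne
  have hout : ∀ i : Fin n, (β b : ℕ) < (β i : ℕ) → m i ≤ 0 := by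
    intro i hi
    rw [hmapp]
    refine Finset.sum_nonpos fun j hj => hLoff i j ?_
    intro h
    subst h
    exact absurd (hβb i hj) (by omega)
  have hzero : ∀ i : Fin n, (β b : ℕ) + 2 ≤ (β i : ℕ) → m i = 0 := by
    intro i hi
    rw [hmapp]
    refine Finset.sum_eq_zero fun j hj => hβzero i j ?_
    have := hβb j hj
    omega
  have hma : m a < 0 := by
    have hne : ∀ j ∈ C, a ≠ j := by
      intro j hj h
      subst h
      have := hβb a hj
      omega
    have h1 : m a = L a b + ∑ j ∈ C.erase b, L a j := by
      rw [hmapp, ← Finset.add_sum_erase _ _ hbC]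
    have h2 : ∑ j ∈ C.erase b, L a j ≤ 0 :=
      Finset.sum_nonpos fun j hj => hLoff a j (hne j (Finset.mem_of_mem_erase hj))
    have h3 : L a b < 0 := lt_of_le_of_ne (hLoff a b (hne b hbC)) hLab
    omega
  -- the largest index with m ≠ 0
  set S : Finset (Fin n) := Finset.univ.filter (fun i => m i ≠ 0) with hS
  have haS : a ∈ S := by simp [hS]; omega
  have hSne : S.Nonempty := ⟨a, haS⟩
  set js : Fin n := S.max' hSne with hjs
  have hjsne : m js ≠ 0 := by
    have := S.max'_mem hSne
    simp [hS] at this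
    exact this
  have hjsa : a ≤ js := S.le_max' a haS
  have hβjs : (β b : ℕ) + 1 ≤ (β js : ℕ) := hab ▸ hβmono hjsa
  have hmjs : m js < 0 := by
    rcases Nat.lt_or_ge (β js : ℕ) ((β b : ℕ) + 2) with h | h
    · have : (β js : ℕ) = (β b : ℕ) + 1 := by omega
      exact lt_of_le_of_ne (hout js (by omega)) hjsne
    · exact absurd (hzero js h) hjsne
  have htail : ∀ k : Fin n, js < k → m k = 0 := by
    intro k hk
    by_contra h
    have : k ∈ S := by simp [hS, h]
    exact absurd (S.le_max' k this) (not_le.mpr hk)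
  -- basic facts about exponents
  have hpos_apply : ∀ i, posExp m i = (m i).toNat := fun i => rfl
  have hneg_apply : ∀ i, negExp m i = (-(m i)).toNat := fun i => rfl
  have hexp_ne : posExp m ≠ negExp m := by
    intro h
    have := DFunLike.congr_fun h js
    rw [hpos_apply, hneg_apply] at this
    omega
  have hdegeq : ∑ i, ν i * posExp m i = ∑ i, ν i * negExp m i := by
    have key : ∑ i, ((ν i : ℤ) * ((m i).toNat : ℤ) - (ν i : ℤ) * (((-(m i)).toNat : ℤ))) = 0 := by
      rw [← hdeg0]
      refine Finset.sum_congr rfl fun i _ => ?_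
      rw [← mul_sub]
      congr 1
      omega
    rw [Finset.sum_sub_distrib, sub_eq_zero] at key
    have : ((∑ i, ν i * posExp m i : ℕ) : ℤ) = ((∑ i, ν i * negExp m i : ℕ) : ℤ) := by
      push_cast
      simpa [hpos_apply, hneg_apply] using key
    exact_mod_cast this
  have hw : ∀ dd : Fin n →₀ ℕ, (Finsupp.weight ν) dd = ∑ i, ν i * dd i := by
    intro dd
    rw [Finsupp.weight_apply, Finsupp.sum_fintype]
    · exact Finset.sum_congr rfl fun i _ => by rw [smul_eq_mul, mul_comm]
    · intro i; simp
  have hsupp : ∀ dd : Fin n →₀ ℕ, coeff dd (binom K m) ≠ 0 →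
      dd = posExp m ∨ dd = negExp m := by
    intro dd hdd
    by_contra hc
    push_neg at hc
    simp [binom, coeff_sub, coeff_monomial, Ne.symm hc.1, Ne.symm hc.2] at hdd
  refine ⟨⟨∑ i, ν i * posExp m i, ?_⟩, ?_, ?_⟩
  · intro dd hdd
    rcases hsupp dd hdd with h | h <;> subst h
    · exact hw _
    · rw [hw, hdegeq]
  · simp [binom, coeff_sub, coeff_monomial, Ne.symm hexp_ne]
  · intro α hα hαne
    have : α = negExp m := by
      rcases hsupp α (by simpa [mem_support_iff] using hα) with h | h
      · exact absurd h hαne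
      · exact h
    subst this
    refine Or.inr ⟨hdegeq, js, ?_, ?_⟩
    · rw [hpos_apply, hneg_apply]
      omega
    · intro k hk
      rw [hpos_apply, hneg_apply, htail k hk]
      simp
end

section
/- Let L be an n×n ICB matrix in δ-block echelon form and K a field. Then the assignment C ↦ f_C is injective on nonempty subsets of {1,…,n−1}: for nonempty C, D ⊆ {1,…,n−1}, f_C = f_D if and only if C = D. -/
open MvPolynomial Finset

lemma posExp_apply {n : ℕ} (m : Fin n → ℤ) (i : Fin n) : posExp m i = (m i).toNat := rfl

lemma negExp_apply {n : ℕ} (m : Fin n → ℤ) (i : Fin n) : negExp m i = (-(m i)).toNat := rfl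

lemma recover_m {n : ℕ} (m : Fin n → ℤ) (i : Fin n) :
    (posExp m i : ℤ) - (negExp m i : ℤ) = m i := by
  rw [posExp_apply, negExp_apply]
  exact Int.toNat_sub_toNat_neg (m i)

lemma posExp_eq_negExp_iff {n : ℕ} (m : Fin n → ℤ) : posExp m = negExp m ↔ m = 0 := by
  constructor
  · intro h
    funext i
    have h1 := recover_m m i
    have h2 : posExp m i = negExp m i := by rw [h]
    simp only [Pi.zero_apply]
    omega
  · intro h
    subst h
    ext i
    simp [posExp_apply, negExp_apply]

lemma monomial_sub_eq {K : Type*} [Field K] {n : ℕ} (p q p' q' : Fin n →₀ ℕ)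
    (h : (monomial p (1 : K)) - monomial q 1 = monomial p' 1 - monomial q' 1) :
    (p = p' ∧ q = q') ∨ (p = q' ∧ q = p') ∨ (p = q ∧ p' = q') := by
  have cf : ∀ x : Fin n →₀ ℕ,
      ((if p = x then (1:K) else 0) - (if q = x then 1 else 0)) =
      ((if p' = x then (1:K) else 0) - (if q' = x then 1 else 0)) := by
    intro x
    have := congrArg (MvPolynomial.coeff x) h
    rwa [MvPolynomial.coeff_sub, MvPolynomial.coeff_sub, MvPolynomial.coeff_monomial,
      MvPolynomial.coeff_monomial, MvPolynomial.coeff_monomial,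
      MvPolynomial.coeff_monomial] at this
  by_cases hpq : p = q
  · refine Or.inr (Or.inr ⟨hpq, ?_⟩)
    have t := cf p'
    rw [hpq, sub_self] at t
    by_cases h1 : q' = p'
    · exact h1.symm
    · rw [if_pos rfl, if_neg h1, sub_zero] at t
      exact absurd t.symm one_ne_zero
  · by_cases hpq' : p' = q'
    · exfalso
      have t := cf p
      rw [hpq', sub_self] at t
      rw [if_pos rfl, if_neg (fun hc : q = p => hpq hc.symm), sub_zero] at t
      exact one_ne_zero t
    · by_cases hpp : p = p'
      · refine Or.inl ⟨hpp, ?_⟩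
        have t := cf q'
        rw [← hpp, if_pos rfl] at t
        by_cases hqq : q = q'
        · exact hqq
        · exfalso
          rw [if_neg hqq, sub_zero] at t
          have h01 : (0:K) = 1 := by linear_combination -t
          exact one_ne_zero h01.symm
      · -- cross case
        have t1 := cf p
        rw [if_pos rfl, if_neg (fun hc : q = p => hpq hc.symm),
          if_neg (fun hc : p' = p => hpp hc.symm), sub_zero, zero_sub] at t1
        have hq'p : q' = p := by
          by_contra hc
          rw [if_neg hc, neg_zero] at t1
          exact one_ne_zero t1
        have t2 := cf p'
        rw [if_neg hpp, if_pos rfl, if_neg (fun hc : q' = p' => hpq' hc.symm),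
          sub_zero, zero_sub] at t2
        have hqp' : q = p' := by
          by_contra hc
          rw [if_neg hc, neg_zero] at t2
          exact one_ne_zero t2.symm
        exact Or.inr (Or.inl ⟨hq'p.symm, hqp'⟩)

lemma binom_eq_cases {K : Type*} [Field K] {n : ℕ} (m m' : Fin n → ℤ)
    (h : binom K m = binom K m') : m = m' ∨ m = -m' := by
  unfold binom at h
  rcases monomial_sub_eq _ _ _ _ h with ⟨h1, h2⟩ | ⟨h1, h2⟩ | ⟨h1, h2⟩
  · left
    funext i
    have a := recover_m m i
    have b := recover_m m' i
    have e1 : posExp m i = posExp m' i := by rw [h1]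
    have e2 : negExp m i = negExp m' i := by rw [h2]
    omega
  · right
    funext i
    have a := recover_m m i
    have b := recover_m m' i
    have e1 : posExp m i = negExp m' i := by rw [h1]
    have e2 : negExp m i = posExp m' i := by rw [h2]
    simp only [Pi.neg_apply]
    omega
  · left
    have hm : m = 0 := (posExp_eq_negExp_iff m).mp h1
    have hm' : m' = 0 := (posExp_eq_negExp_iff m').mp h2
    rw [hm, hm']

/-- Kernel of an ICB matrix consists of constant vectors. -/
lemma icb_kernel_const {n : ℕ} (hn : 0 < n) {L : Matrix (Fin n) (Fin n) ℤ}
    (hL : IsICB n L) (v : Fin n → ℤ) (hv : L.mulVec v = 0) :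
    ∀ i j : Fin n, v i = v j := by
  obtain ⟨⟨hdiag, hoff, hrow, _⟩, hirr⟩ := hL
  haveI : Nonempty (Fin n) := ⟨⟨0, hn⟩⟩
  obtain ⟨i₀, -, hi₀⟩ := Finset.exists_max_image (Finset.univ : Finset (Fin n)) v
    Finset.univ_nonempty
  set M := v i₀ with hM
  -- key: if v i = M and L i j ≠ 0 then v j = M
  have key : ∀ i : Fin n, v i = M → ∀ j : Fin n, L i j ≠ 0 → v j = M := by
    intro i hi j hij
    have hsum : ∑ k, L i k * (v k - M) = 0 := by
      have h1 : L.mulVec v i = 0 := by rw [hv]; rfl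
      have h2 : ∑ k, L i k * v k = 0 := h1
      have h3 : ∑ k, L i k * M = 0 := by
        rw [← Finset.sum_mul, hrow i, zero_mul]
      calc ∑ k, L i k * (v k - M) = ∑ k, (L i k * v k - L i k * M) := by
            simp [mul_sub]
        _ = (∑ k, L i k * v k) - ∑ k, L i k * M := by rw [Finset.sum_sub_distrib]
        _ = 0 := by rw [h2, h3]; ring
    have hnonneg : ∀ k ∈ Finset.univ, (0 : ℤ) ≤ L i k * (v k - M) := by
      intro k _
      by_cases hk : k = i
      · subst hk; rw [hi]; simp
      · have h1 : L i k ≤ 0 := hoff i k (fun hc => hk hc.symm)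
        have h2 : v k - M ≤ 0 := by
          have := hi₀ k (Finset.mem_univ k)
          omega
        nlinarith [h1, h2]
    have := (Finset.sum_eq_zero_iff_of_nonneg hnonneg).mp hsum j (Finset.mem_univ j)
    rcases mul_eq_zero.mp this with h | h
    · exact absurd h hij
    · omega
  -- irreducibility: all of v equals M
  have hall : ∀ i, v i = M := by
    by_contra hc
    push_neg at hc
    apply hirr
    refine ⟨{i | v i = M}, {i | v i ≠ M}, ⟨i₀, hM.symm⟩, hc, ?_, ?_, ?_⟩
    · rw [Set.disjoint_left]; intro a ha hb; exact hb ha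
    · ext a; by_cases h : v a = M <;> simp [h]
    · intro i hi j hj
      by_contra hLij
      exact hj (key i hi j hLij)
  intro i j
  rw [hall i, hall j]

/-- Let `L` be an ICB matrix in `δ`-block echelon form and `K` a field.
The assignment `C ↦ f_C = x^{(LχC)⁺} - x^{(LχC)⁻}` is injective on nonempty subsets of
`{1,…,n-1}`: `f_C = f_D` iff `C = D`. -/
theorem binom_injective (n : ℕ) (hn : 3 ≤ n)
    (L : Matrix (Fin n) (Fin n) ℤ) (hL : IsICB n L)
    (δ : ℕ) (hech : IsBlockEchelon n δ L)
    (K : Type*) [Field K] :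
    ∀ C D : Finset (Fin n), C.Nonempty → D.Nonempty →
      (⟨n - 1, by omega⟩ : Fin n) ∉ C → (⟨n - 1, by omega⟩ : Fin n) ∉ D →
      (binom K (L.mulVec (chi C)) = binom K (L.mulVec (chi D)) ↔ C = D) := by
  intro C D hC hD hCn hDn
  constructor
  · intro h
    set e : Fin n := (⟨n - 1, by omega⟩ : Fin n) with he
    rcases binom_eq_cases _ _ h with heq | heq
    · -- L (χC - χD) = 0
      have hker : L.mulVec (chi C - chi D) = 0 := by
        rw [Matrix.mulVec_sub, heq, sub_self]
      have hconst := icb_kernel_const (by omega) hL (chi C - chi D) hker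
      have hce : chi C e = 0 := by simp [chi, hCn]
      have hde : chi D e = 0 := by simp [chi, hDn]
      ext i
      have := hconst i e
      simp only [Pi.sub_apply, hce, hde, sub_zero] at this
      have hchi : chi C i = chi D i := by omega
      by_cases hiC : i ∈ C <;> by_cases hiD : i ∈ D <;>
        simp [chi, hiC, hiD] at hchi ⊢
    · -- L (χC + χD) = 0
      exfalso
      have hker : L.mulVec (chi C + chi D) = 0 := by
        rw [Matrix.mulVec_add, heq]
        simp
      have hconst := icb_kernel_const (by omega) hL (chi C + chi D) hker
      have hce : chi C e = 0 := by simp [chi, hCn]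
      have hde : chi D e = 0 := by simp [chi, hDn]
      obtain ⟨i, hi⟩ := hC
      have := hconst i e
      simp only [Pi.add_apply, hce, hde, add_zero] at this
      have h1 : chi C i = 1 := by simp [chi, hi]
      have h2 : 0 ≤ chi D i := by unfold chi; split <;> omega
      omega
  · intro h; rw [h]
end
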